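/- Define the operator ℒ̄ on the Banach space B([0,T]×𝒳) of bounded Borel measurable functions with the sup norm by (ℒ̄ψ)(t,x) = e^{βt} ∫_t^T sup_{π∈Π} { R(s,x) + Σ_{S∈𝒜(x)} ( Σ_{y∈𝒳} e^{−βs} ψ(s,y) q(y|s,x,S) ) π(S|s,x) } ds, where β = 2λ+1 and R(s,x) = Σ_{S∈𝒜(x)} r(S) π(S|s,x) + γ ℋ(π(·|s,x)). Then ℒ̄ is a contraction on B([0,T]×𝒳), and the exploratory HJB equation ∂v/∂t(t,x) + sup_{π∈Π} Σ_{S∈𝒜(x)} [ H(t,x,S,v(·,·)) − γ log π(S|t,x) ] π(S|t,x) = 0 on [0,T)×𝒳 with v(T,x) = 0 admits a solution in C^{1,0}([0,T]×𝒳). -/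

import Mathlib

open MeasureTheory intervalIntegral

namespace RLNRM

/-- Primitives of the choice-based network revenue management model:
`m` resources with initial inventory `c`, `n` products with prices `p`,
consumption matrix `A`, Poisson arrival rate `lam` on the horizon `[0,T]`,
MNL-type choice probabilities `P j S` (buy `j` when offered `S`) and `P0 S`
(no purchase), and entropy temperature `gamma`. -/
structure NRM (m n : ℕ) where
  c : Fin m → ℕ
  A : Fin m → Fin n → ℕ
  p : Fin n → ℝ
  lam : ℝ
  lam_pos : 0 < lam
  T : ℝ
  T_pos : 0 < T
  gamma : ℝ
  gamma_nonneg : 0 ≤ gamma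
  P : Finset (Fin n) → Fin n → ℝ
  P0 : Finset (Fin n) → ℝ
  P_nonneg : ∀ S j, 0 ≤ P S j
  P0_nonneg : ∀ S, 0 ≤ P0 S
  P_sum_one : ∀ S, P0 S + ∑ j ∈ S, P S j = 1
  P_not_mem : ∀ S j, j ∉ S → P S j = 0

variable {m n : ℕ}

/-- The `j`-th column of the consumption matrix, as an integer vector. -/
def NRM.col (M : NRM m n) (j : Fin n) : Fin m → ℤ := fun i => (M.A i j : ℤ)

/-- The initial inventory as an integer vector. -/
def NRM.cZ (M : NRM m n) : Fin m → ℤ := fun i => (M.c i : ℤ)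

/-- The state space `𝒳 = {0,…,c 1} × ⋯ × {0,…,c m}`. -/
noncomputable def NRM.States (M : NRM m n) : Finset (Fin m → ℤ) :=
  Fintype.piFinset fun i => Finset.Icc 0 (M.c i : ℤ)

/-- The feasible assortments `𝒜(x)` at state `x`. -/
def NRM.feas (M : NRM m n) (x : Fin m → ℤ) : Finset (Finset (Fin n)) :=
  Finset.univ.filter fun S => ∀ j ∈ S, ∀ i, (M.A i j : ℤ) ≤ x i

/-- The controlled transition rates `q(y | t, x, S)`. -/
noncomputable def NRM.q (M : NRM m n) (_t : ℝ) (x : Fin m → ℤ) (S : Finset (Fin n))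
    (y : Fin m → ℤ) : ℝ :=
  if y = x then -(M.lam * (1 - M.P0 S))
  else ∑ j ∈ Finset.univ.filter (fun j : Fin n => M.col j = x - y), M.lam * M.P S j

/-- The revenue rate `r(S) = λ ∑ j, p j * P j S`. -/
noncomputable def NRM.r (M : NRM m n) (S : Finset (Fin n)) : ℝ :=
  M.lam * ∑ j, M.p j * M.P S j

/-- The Hamiltonian `H(t, x, S, v) = r S + ∑_{y ∈ 𝒳} v t y * q (y | t, x, S)`. -/
noncomputable def NRM.H (M : NRM m n) (t : ℝ) (x : Fin m → ℤ) (S : Finset (Fin n))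
    (v : ℝ → (Fin m → ℤ) → ℝ) : ℝ :=
  M.r S + ∑ y ∈ M.States, v t y * M.q t x S y

/-- An admissible randomized Markov policy. -/
structure Policy (M : NRM m n) where
  π : ℝ → (Fin m → ℤ) → Finset (Fin n) → ℝ
  measurable_t : ∀ x S, Measurable fun t => π t x S
  nonneg : ∀ t x S, 0 ≤ π t x S
  sum_one : ∀ t x, ∑ S : Finset (Fin n), π t x S = 1
  supported : ∀ t x S, S ∉ M.feas x → π t x S = 0
  continuous_t : ∀ x S, Continuous fun t => π t x S

/-- The entropy `ℋ(π(·|t,x)) = -∑_{S ∈ 𝒜(x)} π(S|t,x) log π(S|t,x)`. -/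
noncomputable def NRM.ent (M : NRM m n) (pol : Policy M) (t : ℝ) (x : Fin m → ℤ) : ℝ :=
  -∑ S ∈ M.feas x, pol.π t x S * Real.log (pol.π t x S)

/-- `v ∈ C^{1,0}([0,T] × 𝒳)`: continuously differentiable in `t` for each state `x`. -/
def NRM.C10 (M : NRM m n) (v : ℝ → (Fin m → ℤ) → ℝ) : Prop :=
  ∀ x ∈ M.States, ContDiffOn ℝ 1 (fun t => v t x) (Set.Icc 0 M.T)

/-- The time derivative `∂v/∂t (t,x)` (within the horizon `[0,T]`). -/
noncomputable def NRM.dvt (M : NRM m n) (v : ℝ → (Fin m → ℤ) → ℝ) (t : ℝ)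
    (x : Fin m → ℤ) : ℝ :=
  derivWithin (fun s => v s x) (Set.Icc 0 M.T) t

/-- Right-continuous state path built from the jump data of a trajectory:
`x0` initial state, `L` jumps at times `τ k` selling products `prd k`. -/
noncomputable def pathX (M : NRM m n) (x0 : Fin m → ℤ) (L : ℕ) (τ : ℕ → ℝ)
    (prd : ℕ → Fin n) (t : ℝ) : Fin m → ℤ :=
  x0 - ∑ k ∈ (Finset.range L).filter (fun k => τ k ≤ t), M.col (prd k)

/-- Left limit `X_{t-}` of the state path. -/
noncomputable def pathXleft (M : NRM m n) (x0 : Fin m → ℤ) (L : ℕ) (τ : ℕ → ℝ)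
    (prd : ℕ → Fin n) (t : ℝ) : Fin m → ℤ :=
  x0 - ∑ k ∈ (Finset.range L).filter (fun k => τ k < t), M.col (prd k)

/-- A probabilistic model of the controlled sales process under policy `pol`:
`law t x` is the law of the trajectory conditional on `X_t = x` (Markov family);
a trajectory is described by its `L` sale events, with jump times `τ`, sold
products `prd`, and offered assortments `act`.  The fields record that jumps lie
in `(t, T]`, are ordered, keep the state in `𝒳`, that the sold product belongs to
the offered assortment, and that sales of product `j` have intensity
`λ ∑_{S ∈ 𝒜(X_{s-})} P j S * π(S | s, X_{s-})`. -/
structure SampleModel (M : NRM m n) (pol : Policy M) (Ω : Type*)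
    [MeasurableSpace Ω] where
  law : ℝ → (Fin m → ℤ) → Measure Ω
  law_prob : ∀ t x, IsProbabilityMeasure (law t x)
  L : Ω → ℕ
  τ : Ω → ℕ → ℝ
  prd : Ω → ℕ → Fin n
  act : Ω → ℕ → Finset (Fin n)
  meas_L : Measurable L
  meas_τ : ∀ k, Measurable fun ω => τ ω k
  meas_prd : ∀ k, Measurable fun ω => prd ω k
  jumps_mem : ∀ t x, ∀ᵐ ω ∂law t x, ∀ k < L ω, t < τ ω k ∧ τ ω k ≤ M.T
  jumps_mono : ∀ t x, ∀ᵐ ω ∂law t x, ∀ k l, k < l → l < L ω → τ ω k < τ ω l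
  states_mem : ∀ t x, x ∈ M.States →
    ∀ᵐ ω ∂law t x, ∀ s : ℝ, pathX M x (L ω) (τ ω) (prd ω) s ∈ M.States
  sold_in_act : ∀ t x, ∀ᵐ ω ∂law t x, ∀ k < L ω, prd ω k ∈ act ω k
  intensity : ∀ t x, x ∈ M.States → 0 ≤ t → ∀ (j : Fin n) (u : ℝ), t ≤ u → u ≤ M.T →
    (∫ ω, ((((Finset.range (L ω)).filter fun k => τ ω k ≤ u ∧ prd ω k = j).card : ℝ))
        ∂law t x)
      = ∫ ω, (∫ s in t..u, M.lam *
          ∑ S ∈ M.feas (pathXleft M x (L ω) (τ ω) (prd ω) s),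
            M.P S j * pol.π s (pathXleft M x (L ω) (τ ω) (prd ω) s) S) ∂law t x

variable {M : NRM m n} {pol : Policy M} {Ω : Type*} [MeasurableSpace Ω]

/-- The pathwise reward-plus-entropy-bonus collected on `(t, T]` by a trajectory
started at `(t, x)`: `∫_{(t,T]} p^⊤ dN_s + γ ∫_t^T ℋ(π(·|s, X_{s-})) ds`. -/
noncomputable def SampleModel.rew (V : SampleModel M pol Ω) (t : ℝ) (x : Fin m → ℤ)
    (ω : Ω) : ℝ :=
  (∑ k ∈ Finset.range (V.L ω), if t < V.τ ω k ∧ V.τ ω k ≤ M.T then M.p (V.prd ω k) else 0)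
    + M.gamma * ∫ s in t..M.T, M.ent pol s (pathXleft M x (V.L ω) (V.τ ω) (V.prd ω) s)

/-- The entropy-regularized value function
`J(t,x;π) = E[∫_{(t,T]} p^⊤ dN_s + γ ∫_t^T ℋ(π(·|s, X_{s-})) ds | X_t = x]`. -/
noncomputable def SampleModel.J (V : SampleModel M pol Ω) (t : ℝ) (x : Fin m → ℤ) : ℝ :=
  ∫ ω, V.rew t x ω ∂V.law t x

end RLNRM

namespace RLNRM

/-- The operator `ℒ̄` on `B([0,T] × 𝒳)`:
`(ℒ̄ψ)(t,x) = e^{βt} ∫_t^T sup_{π ∈ Π} { R(s,x) + ∑_{S ∈ 𝒜(x)} (∑_{y ∈ 𝒳} e^{-βs} ψ(s,y) q(y|s,x,S)) π(S|s,x) } ds`,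
with `β = 2λ + 1` and `R(s,x) = ∑_{S ∈ 𝒜(x)} r(S) π(S|s,x) + γ ℋ(π(·|s,x))`. -/
noncomputable def NRM.Lbar {m n : ℕ} (M : NRM m n)
    (ψ : ℝ → (Fin m → ℤ) → ℝ) (t : ℝ) (x : Fin m → ℤ) : ℝ :=
  Real.exp ((2 * M.lam + 1) * t) *
    ∫ s in t..M.T,
      ⨆ pol : Policy M,
        ((∑ S ∈ M.feas x, M.r S * pol.π s x S) + M.gamma * M.ent pol s x
          + ∑ S ∈ M.feas x,
              (∑ y ∈ M.States, Real.exp (-((2 * M.lam + 1) * s)) * ψ s y * M.q s x S y)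
                * pol.π s x S)

/-!
For scores `g`, the entropy-regularized maximum over policies
`sup_π ∑_S (g S - γ log π S) π S` equals `γ log ∑_S exp (g S / γ)` and is attained by the Gibbs
policy. Hence both the integrand of `ℒ̄` and the supremum in the HJB equation are a soft-max
Hamiltonian, which is `2λ`-Lipschitz in the value function because `∑_y |q(y|x,S)| ≤ 2λ`.
Integrating the resulting bound `2λ C e^{-βs}` against the weight `e^{βt}` gives the contraction
constant `2λ/β < 1`. The fixed point `ψ` of `ℒ̄` on `C([0,T], ℝ^𝒳)` then yields
`v(t,x) = e^{-βt} ψ(t,x)`, which solves `v(t,x) = ∫_t^T γ log ∑_S exp (H(s,x,S,v)/γ) ds`: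
this is the HJB equation in integral form, with `v(T,·) = 0`.
-/

section LogSumExp

variable {ι : Type*} {s : Finset ι}

lemma log_sum_exp_le_add (hs : s.Nonempty) {a b : ι → ℝ} {d : ℝ}
    (hd : ∀ i ∈ s, a i ≤ b i + d) :
    Real.log (∑ i ∈ s, Real.exp (a i)) ≤ Real.log (∑ i ∈ s, Real.exp (b i)) + d := by
  have hb : 0 < ∑ i ∈ s, Real.exp (b i) := Finset.sum_pos (fun _ _ => Real.exp_pos _) hs
  have hle : ∑ i ∈ s, Real.exp (a i) ≤ (∑ i ∈ s, Real.exp (b i)) * Real.exp d := by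
    rw [Finset.sum_mul]
    exact Finset.sum_le_sum fun i hi => by rw [← Real.exp_add]; exact Real.exp_le_exp.2 (hd i hi)
  calc Real.log (∑ i ∈ s, Real.exp (a i))
      ≤ Real.log ((∑ i ∈ s, Real.exp (b i)) * Real.exp d) :=
        Real.log_le_log (Finset.sum_pos (fun _ _ => Real.exp_pos _) hs) hle
    _ = Real.log (∑ i ∈ s, Real.exp (b i)) + d := by
        rw [Real.log_mul hb.ne' (Real.exp_ne_zero d), Real.log_exp]

lemma abs_log_sum_exp_sub_le (hs : s.Nonempty) {a b : ι → ℝ} {d : ℝ}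
    (hd : ∀ i ∈ s, |a i - b i| ≤ d) :
    |Real.log (∑ i ∈ s, Real.exp (a i)) - Real.log (∑ i ∈ s, Real.exp (b i))| ≤ d := by
  have hab := log_sum_exp_le_add hs (a := a) (b := b) fun i hi => by
    linarith [(abs_sub_le_iff.1 (hd i hi)).1]
  have hba := log_sum_exp_le_add hs (a := b) (b := a) fun i hi => by
    linarith [(abs_sub_le_iff.1 (hd i hi)).2]
  exact abs_sub_le_iff.2 ⟨by linarith, by linarith⟩

lemma sum_sub_mul_log_mul_le {γ : ℝ} (hγ : 0 < γ) (g w : ι → ℝ) (hw₀ : ∀ i ∈ s, 0 ≤ w i)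
    (hw₁ : ∑ i ∈ s, w i = 1) :
    ∑ i ∈ s, (g i - γ * Real.log (w i)) * w i
      ≤ γ * Real.log (∑ i ∈ s, Real.exp (g i / γ)) := by
  set Z := ∑ i ∈ s, Real.exp (g i / γ)
  have hs : s.Nonempty := Finset.nonempty_of_sum_ne_zero (by rw [hw₁]; exact one_ne_zero)
  have hZ : 0 < Z := Finset.sum_pos (fun _ _ => Real.exp_pos _) hs
  -- `1 + u ≤ exp u` at `u = g/γ - log Z - log w`, multiplied by `γ w`
  have key : ∀ i ∈ s, (g i - γ * Real.log (w i)) * w i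
      ≤ γ * Real.log Z * w i + γ * (Real.exp (g i / γ) / Z - w i) := by
    intro i hi
    rcases (hw₀ i hi).eq_or_lt with hw | hw
    · rw [← hw]; simp only [mul_zero, sub_zero, zero_add]; positivity
    have hexp : Real.exp (g i / γ - Real.log Z - Real.log (w i))
        = Real.exp (g i / γ) / Z / w i := by
      rw [Real.exp_sub, Real.exp_sub, Real.exp_log hZ, Real.exp_log hw]
    have h := Real.add_one_le_exp (g i / γ - Real.log Z - Real.log (w i))
    rw [hexp] at h
    have h' := mul_le_mul_of_nonneg_left h (mul_nonneg hγ.le hw.le)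
    have e1 : γ * w i * (g i / γ - Real.log Z - Real.log (w i) + 1)
        = (g i - γ * Real.log (w i)) * w i - γ * Real.log Z * w i + γ * w i := by
      field_simp; ring
    have e2 : γ * w i * (Real.exp (g i / γ) / Z / w i) = γ * (Real.exp (g i / γ) / Z) := by
      field_simp
    linarith
  calc ∑ i ∈ s, (g i - γ * Real.log (w i)) * w i
      ≤ ∑ i ∈ s, (γ * Real.log Z * w i + γ * (Real.exp (g i / γ) / Z - w i)) :=
        Finset.sum_le_sum key
    _ = γ * Real.log Z := by
        rw [Finset.sum_add_distrib, ← Finset.mul_sum, ← Finset.mul_sum, Finset.sum_sub_distrib,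
          ← Finset.sum_div, hw₁, div_self hZ.ne']
        ring

lemma sum_sub_mul_log_mul_softmax {γ : ℝ} (hγ : 0 < γ) (hs : s.Nonempty) (g : ι → ℝ) :
    let w := fun i => Real.exp (g i / γ) / ∑ j ∈ s, Real.exp (g j / γ)
    ∑ i ∈ s, (g i - γ * Real.log (w i)) * w i
      = γ * Real.log (∑ i ∈ s, Real.exp (g i / γ)) := by
  intro w
  set Z := ∑ j ∈ s, Real.exp (g j / γ)
  have hZ : 0 < Z := Finset.sum_pos (fun _ _ => Real.exp_pos _) hs
  have hterm : ∀ i ∈ s, (g i - γ * Real.log (w i)) * w i = γ * Real.log Z * w i := by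
    intro i _
    have hlog : Real.log (w i) = g i / γ - Real.log Z := by
      rw [Real.log_div (Real.exp_ne_zero _) hZ.ne', Real.log_exp]
    rw [hlog]
    field_simp
    ring
  rw [Finset.sum_congr rfl hterm, ← Finset.mul_sum, ← Finset.sum_div, div_self hZ.ne', mul_one]

end LogSumExp

lemma integral_exp_neg_mul {β : ℝ} (hβ : β ≠ 0) (a b : ℝ) :
    ∫ s in a..b, Real.exp (-(β * s)) = (Real.exp (-(β * a)) - Real.exp (-(β * b))) / β := by
  have h := intervalIntegral.integral_comp_mul_left (a := a) (b := b) Real.exp (neg_ne_zero.2 hβ)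
  simp only [neg_mul] at h
  rw [h, integral_exp, smul_eq_mul]
  field_simp
  ring

lemma exp_mul_abs_integral_sub_le {f g : ℝ → ℝ} {β K a b : ℝ} (hβ : 0 < β) (hK : 0 ≤ K)
    (hab : a ≤ b) (hf : IntervalIntegrable f volume a b) (hg : IntervalIntegrable g volume a b)
    (hfg : ∀ s ∈ Set.Icc a b, |f s - g s| ≤ K * Real.exp (-(β * s))) :
    Real.exp (β * a) * |(∫ s in a..b, f s) - ∫ s in a..b, g s| ≤ K / β := by
  have hint : ‖∫ s in a..b, (f s - g s)‖ ≤ ∫ s in a..b, K * Real.exp (-(β * s)) :=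
    intervalIntegral.norm_integral_le_of_norm_le hab
      (ae_of_all _ fun s hs => hfg s (Set.Ioc_subset_Icc_self hs))
      ((by fun_prop : Continuous fun s => K * Real.exp (-(β * s))).intervalIntegrable _ _)
  rw [Real.norm_eq_abs, intervalIntegral.integral_const_mul, integral_exp_neg_mul hβ.ne',
    intervalIntegral.integral_sub hf hg] at hint
  have hexp : Real.exp (β * a) * Real.exp (-(β * a)) = 1 := by
    rw [← Real.exp_add, add_neg_cancel, Real.exp_zero]
  calc Real.exp (β * a) * |(∫ s in a..b, f s) - ∫ s in a..b, g s|
      ≤ Real.exp (β * a) * (K * ((Real.exp (-(β * a)) - Real.exp (-(β * b))) / β)) :=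
        mul_le_mul_of_nonneg_left hint (Real.exp_pos _).le
    _ = K / β - Real.exp (β * a) * (K * Real.exp (-(β * b)) / β) := by
        linear_combination (K / β) * hexp
    _ ≤ K / β := sub_le_self _ (by positivity)

lemma hasDerivAt_integral_left_of_continuous {g : ℝ → ℝ} (hg : Continuous g) (b t : ℝ) :
    HasDerivAt (fun u => ∫ s in u..b, g s) (-g t) t :=
  intervalIntegral.integral_hasDerivAt_left (hg.intervalIntegrable _ _)
    hg.aestronglyMeasurable.stronglyMeasurableAtFilter hg.continuousAt

section Model

variable {m n : ℕ} (M : NRM m n)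

lemma NRM.empty_mem_feas (x : Fin m → ℤ) : ∅ ∈ M.feas x := by
  simp [NRM.feas]

lemma NRM.feas_nonempty (x : Fin m → ℤ) : (M.feas x).Nonempty :=
  ⟨∅, M.empty_mem_feas x⟩

lemma NRM.zero_mem_States : (0 : Fin m → ℤ) ∈ M.States :=
  Fintype.mem_piFinset.2 fun _ => Finset.mem_Icc.2 ⟨le_rfl, Int.natCast_nonneg _⟩

lemma NRM.sum_P (S : Finset (Fin n)) : ∑ j, M.P S j = 1 - M.P0 S := by
  rw [← Finset.sum_subset (Finset.subset_univ S) fun j _ hj => M.P_not_mem S j hj]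
  linarith [M.P_sum_one S]

/-- The total outflow rate `λ(1 - P₀(S))` is counted once by the diagonal entry and once by the
off-diagonal ones. -/
lemma NRM.sum_abs_q_le (t : ℝ) (x : Fin m → ℤ) (S : Finset (Fin n)) :
    ∑ y ∈ M.States, |M.q t x S y| ≤ 2 * M.lam := by
  classical
  have hP0 := M.P0_nonneg S
  have hlam := M.lam_pos
  have hout : 0 ≤ M.lam * (1 - M.P0 S) := by
    rw [← M.sum_P, Finset.mul_sum]
    exact Finset.sum_nonneg fun j _ => mul_nonneg hlam.le (M.P_nonneg S j)
  have hdiag : |M.q t x S x| = M.lam * (1 - M.P0 S) := by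
    rw [NRM.q, if_pos rfl, abs_neg, abs_of_nonneg hout]
  have hoff : ∑ y ∈ M.States.erase x, |M.q t x S y| ≤ M.lam * (1 - M.P0 S) := by
    have hfib : ∀ y ∈ M.States.erase x, |M.q t x S y|
        = ∑ j ∈ Finset.univ with x - M.col j = y, M.lam * M.P S j := by
      intro y hy
      rw [NRM.q, if_neg (Finset.ne_of_mem_erase hy), abs_of_nonneg
        (Finset.sum_nonneg fun j _ => mul_nonneg hlam.le (M.P_nonneg S j))]
      exact Finset.sum_congr (Finset.filter_congr fun j _ =>
        ⟨fun h => by rw [h, sub_sub_cancel], fun h => by rw [← h, sub_sub_cancel]⟩) fun _ _ => rfl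
    rw [Finset.sum_congr rfl hfib, ← M.sum_P, Finset.mul_sum]
    exact Finset.sum_fiberwise_le_sum_of_sum_fiber_nonneg fun y _ =>
      Finset.sum_nonneg fun j _ => mul_nonneg hlam.le (M.P_nonneg S j)
  calc ∑ y ∈ M.States, |M.q t x S y|
      ≤ ∑ y ∈ insert x (M.States.erase x), |M.q t x S y| :=
        Finset.sum_le_sum_of_subset_of_nonneg (Finset.insert_erase_subset _ _)
          fun _ _ _ => abs_nonneg _
    _ = |M.q t x S x| + ∑ y ∈ M.States.erase x, |M.q t x S y| :=
        Finset.sum_insert (Finset.notMem_erase x _)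
    _ ≤ 2 * M.lam := by nlinarith

lemma Policy.sum_feas (pol : Policy M) (t : ℝ) (x : Fin m → ℤ) :
    ∑ S ∈ M.feas x, pol.π t x S = 1 := by
  rw [Finset.sum_subset (Finset.subset_univ _) fun S _ hS => pol.supported t x S hS]
  exact pol.sum_one t x

noncomputable def gibbsPolicy (g : Finset (Fin n) → ℝ) : Policy M where
  π _ x S := if S ∈ M.feas x then
    Real.exp (g S / M.gamma) / ∑ S' ∈ M.feas x, Real.exp (g S' / M.gamma) else 0
  measurable_t _ _ := measurable_const
  nonneg _ _ _ := by split_ifs <;> positivity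
  sum_one _ x := by
    rw [Finset.sum_ite_mem, Finset.univ_inter, ← Finset.sum_div, div_self
      (Finset.sum_pos (fun _ _ => Real.exp_pos _) (M.feas_nonempty x)).ne']
  supported _ _ _ hS := if_neg hS
  continuous_t _ _ := continuous_const

lemma iSup_policy_eq_log_sum_exp (hγ : 0 < M.gamma) (t : ℝ) (x : Fin m → ℤ)
    (g : Finset (Fin n) → ℝ) :
    (⨆ pol : Policy M, ∑ S ∈ M.feas x, (g S - M.gamma * Real.log (pol.π t x S)) * pol.π t x S)
      = M.gamma * Real.log (∑ S ∈ M.feas x, Real.exp (g S / M.gamma)) := by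
  have hle : ∀ pol : Policy M, ∑ S ∈ M.feas x,
      (g S - M.gamma * Real.log (pol.π t x S)) * pol.π t x S
        ≤ M.gamma * Real.log (∑ S ∈ M.feas x, Real.exp (g S / M.gamma)) := fun pol =>
    sum_sub_mul_log_mul_le hγ g _ (fun S _ => pol.nonneg t x S) (pol.sum_feas M t x)
  have hgibbs : ∑ S ∈ M.feas x, (g S - M.gamma * Real.log ((gibbsPolicy M g).π t x S))
      * (gibbsPolicy M g).π t x S
        = M.gamma * Real.log (∑ S ∈ M.feas x, Real.exp (g S / M.gamma)) := by
    rw [← sum_sub_mul_log_mul_softmax hγ (M.feas_nonempty x) g]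
    refine Finset.sum_congr rfl fun S hS => ?_
    simp only [gibbsPolicy, if_pos hS]
  have : Nonempty (Policy M) := ⟨gibbsPolicy M g⟩
  exact le_antisymm (ciSup_le hle)
    (hgibbs.symm.le.trans (le_ciSup ⟨_, Set.forall_mem_range.2 hle⟩ (gibbsPolicy M g)))

noncomputable def NRM.softH (t : ℝ) (x : Fin m → ℤ) (v : ℝ → (Fin m → ℤ) → ℝ) : ℝ :=
  M.gamma * Real.log (∑ S ∈ M.feas x, Real.exp (M.H t x S v / M.gamma))

lemma NRM.iSup_policy_eq_softH (hγ : 0 < M.gamma) (t : ℝ) (x : Fin m → ℤ)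
    (v : ℝ → (Fin m → ℤ) → ℝ) :
    (⨆ pol : Policy M, ∑ S ∈ M.feas x,
        (M.H t x S v - M.gamma * Real.log (pol.π t x S)) * pol.π t x S) = M.softH t x v :=
  iSup_policy_eq_log_sum_exp M hγ t x _

lemma NRM.Lbar_eq_integral_softH (hγ : 0 < M.gamma) (ψ : ℝ → (Fin m → ℤ) → ℝ) (t : ℝ)
    (x : Fin m → ℤ) :
    M.Lbar ψ t x = Real.exp ((2 * M.lam + 1) * t) *
      ∫ s in t..M.T, M.softH s x fun s y => Real.exp (-((2 * M.lam + 1) * s)) * ψ s y := by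
  refine congrArg _ (intervalIntegral.integral_congr fun s _ => ?_)
  refine (iSup_congr fun pol => ?_).trans (M.iSup_policy_eq_softH hγ s x _)
  have hent : M.gamma * M.ent pol s x
      = -∑ S ∈ M.feas x, M.gamma * Real.log (pol.π s x S) * pol.π s x S := by
    rw [NRM.ent, mul_neg, Finset.mul_sum]
    exact congrArg _ (Finset.sum_congr rfl fun _ _ => by ring)
  simp only [NRM.H, add_mul, sub_mul, Finset.sum_add_distrib, Finset.sum_sub_distrib, hent]
  ring

lemma NRM.abs_H_sub_le (t : ℝ) (x : Fin m → ℤ) (S : Finset (Fin n))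
    {v w : ℝ → (Fin m → ℤ) → ℝ} {C : ℝ} (hvw : ∀ y ∈ M.States, |v t y - w t y| ≤ C) :
    |M.H t x S v - M.H t x S w| ≤ 2 * M.lam * C := by
  have hC : 0 ≤ C := (abs_nonneg _).trans (hvw 0 M.zero_mem_States)
  calc |M.H t x S v - M.H t x S w|
      = |∑ y ∈ M.States, (v t y - w t y) * M.q t x S y| := by
        simp only [NRM.H, add_sub_add_left_eq_sub, ← Finset.sum_sub_distrib, sub_mul]
    _ ≤ ∑ y ∈ M.States, C * |M.q t x S y| :=
        (Finset.abs_sum_le_sum_abs _ _).trans <| Finset.sum_le_sum fun y hy => by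
          rw [abs_mul]; exact mul_le_mul_of_nonneg_right (hvw y hy) (abs_nonneg _)
    _ ≤ C * (2 * M.lam) := by rw [← Finset.mul_sum]; gcongr; exact M.sum_abs_q_le t x S
    _ = 2 * M.lam * C := mul_comm _ _

lemma NRM.abs_softH_sub_le (hγ : 0 < M.gamma) (t : ℝ) (x : Fin m → ℤ)
    {v w : ℝ → (Fin m → ℤ) → ℝ} {C : ℝ} (hvw : ∀ y ∈ M.States, |v t y - w t y| ≤ C) :
    |M.softH t x v - M.softH t x w| ≤ 2 * M.lam * C := by
  have h := abs_log_sum_exp_sub_le (M.feas_nonempty x) (d := 2 * M.lam * C / M.gamma)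
    (a := fun S => M.H t x S v / M.gamma) (b := fun S => M.H t x S w / M.gamma)
    fun S _ => by
      rw [← sub_div, abs_div, abs_of_pos hγ]
      exact div_le_div_of_nonneg_right (M.abs_H_sub_le t x S hvw) hγ.le
  rw [NRM.softH, NRM.softH, ← mul_sub, abs_mul, abs_of_pos hγ]
  calc _ ≤ M.gamma * (2 * M.lam * C / M.gamma) := mul_le_mul_of_nonneg_left h hγ.le
    _ = 2 * M.lam * C := by field_simp

end Model

section Contraction

variable {m n : ℕ} (M : NRM m n)

lemma NRM.measurable_softH (x : Fin m → ℤ) {v : ℝ → (Fin m → ℤ) → ℝ}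
    (hv : ∀ y, Measurable fun s => v s y) : Measurable fun s => M.softH s x v := by
  refine measurable_const.mul (Real.measurable_log.comp (Finset.measurable_sum _ fun S _ => ?_))
  refine Real.measurable_exp.comp (Measurable.div_const ?_ _)
  exact measurable_const.add (Finset.measurable_sum _ fun y _ => (hv y).mul measurable_const)

lemma NRM.continuous_softH (x : Fin m → ℤ) {v : ℝ → (Fin m → ℤ) → ℝ}
    (hv : ∀ y, Continuous fun s => v s y) : Continuous fun s => M.softH s x v := by
  refine continuous_const.mul (Continuous.log (continuous_finsetSum _ fun S _ => ?_) fun _ =>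
    (Finset.sum_pos (fun _ _ => Real.exp_pos _) (M.feas_nonempty x)).ne')
  exact Real.continuous_exp.comp ((continuous_const.add
    (continuous_finsetSum _ fun y _ => (hv y).mul continuous_const)).div_const _)

lemma NRM.intervalIntegrable_softH (hγ : 0 < M.gamma) {v : ℝ → (Fin m → ℤ) → ℝ}
    (hv : ∀ y, Measurable fun s => v s y) {C : ℝ}
    (hC : ∀ s ∈ Set.Icc 0 M.T, ∀ y ∈ M.States, |v s y| ≤ C) (x : Fin m → ℤ) {t : ℝ}
    (ht : t ∈ Set.Icc 0 M.T) : IntervalIntegrable (fun s => M.softH s x v) volume t M.T := by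
  refine (intervalIntegrable_const (c := |M.softH 0 x fun _ _ => 0| + 2 * M.lam * C)).mono_fun'
    (M.measurable_softH x hv).aestronglyMeasurable ?_
  rw [Set.uIoc_of_le ht.2]
  refine ae_restrict_of_forall_mem measurableSet_Ioc fun s hs => ?_
  -- at `v = 0` the soft Hamiltonian does not depend on time
  have hzero : M.softH s x (fun _ _ => 0) = M.softH 0 x fun _ _ => 0 := rfl
  have hlip := M.abs_softH_sub_le hγ s x (w := fun _ _ => 0) (C := C) fun y hy => by
    simpa using hC s ⟨ht.1.trans hs.1.le, hs.2⟩ y hy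
  show ‖M.softH s x v‖ ≤ _
  rw [Real.norm_eq_abs, ← hzero]
  linarith [abs_sub_abs_le_abs_sub (M.softH s x v) (M.softH s x fun _ _ => 0)]

lemma NRM.abs_exp_mul_le {ψ : ℝ → (Fin m → ℤ) → ℝ} {C : ℝ}
    (hC : ∀ s ∈ Set.Icc 0 M.T, ∀ y ∈ M.States, |ψ s y| ≤ C) :
    ∀ s ∈ Set.Icc 0 M.T, ∀ y ∈ M.States, |Real.exp (-((2 * M.lam + 1) * s)) * ψ s y| ≤ C := by
  intro s hs y hy
  have he : Real.exp (-((2 * M.lam + 1) * s)) ≤ 1 :=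
    Real.exp_le_one_iff.2 (neg_nonpos.2 (mul_nonneg (by linarith [M.lam_pos]) hs.1))
  rw [abs_mul, Real.abs_exp]
  exact (mul_le_of_le_one_left (abs_nonneg _) he).trans (hC s hs y hy)

theorem NRM.abs_Lbar_sub_le (hγ : 0 < M.gamma) {ψ₁ ψ₂ : ℝ → (Fin m → ℤ) → ℝ}
    (hm₁ : ∀ y, Measurable fun s => ψ₁ s y) (hm₂ : ∀ y, Measurable fun s => ψ₂ s y)
    {C₁ C₂ C : ℝ} (hb₁ : ∀ s ∈ Set.Icc 0 M.T, ∀ y ∈ M.States, |ψ₁ s y| ≤ C₁)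
    (hb₂ : ∀ s ∈ Set.Icc 0 M.T, ∀ y ∈ M.States, |ψ₂ s y| ≤ C₂)
    (hC : ∀ s ∈ Set.Icc 0 M.T, ∀ y ∈ M.States, |ψ₁ s y - ψ₂ s y| ≤ C)
    {t : ℝ} (ht : t ∈ Set.Icc 0 M.T) (x : Fin m → ℤ) :
    |M.Lbar ψ₁ t x - M.Lbar ψ₂ t x| ≤ 2 * M.lam / (2 * M.lam + 1) * C := by
  have hβ : 0 < 2 * M.lam + 1 := by linarith [M.lam_pos]
  have hC₀ : 0 ≤ C := (abs_nonneg _).trans (hC 0 ⟨le_rfl, M.T_pos.le⟩ 0 M.zero_mem_States)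
  have hweighted : ∀ ψ : ℝ → (Fin m → ℤ) → ℝ, (∀ y, Measurable fun s => ψ s y) →
      ∀ y, Measurable fun s => Real.exp (-((2 * M.lam + 1) * s)) * ψ s y := fun ψ hψ y =>
    (Real.measurable_exp.comp (measurable_const.mul measurable_id).neg).mul (hψ y)
  rw [M.Lbar_eq_integral_softH hγ, M.Lbar_eq_integral_softH hγ, ← mul_sub, abs_mul, Real.abs_exp]
  calc _ ≤ 2 * M.lam * C / (2 * M.lam + 1) :=
        exp_mul_abs_integral_sub_le hβ (mul_nonneg (by linarith [M.lam_pos]) hC₀) ht.2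
          (M.intervalIntegrable_softH hγ (hweighted ψ₁ hm₁) (M.abs_exp_mul_le hb₁) x ht)
          (M.intervalIntegrable_softH hγ (hweighted ψ₂ hm₂) (M.abs_exp_mul_le hb₂) x ht)
          fun s hs => ?_
    _ = 2 * M.lam / (2 * M.lam + 1) * C := by ring
  have hs₀ : s ∈ Set.Icc 0 M.T := ⟨ht.1.trans hs.1, hs.2⟩
  have h := M.abs_softH_sub_le hγ s x (C := Real.exp (-((2 * M.lam + 1) * s)) * C)
    (v := fun s y => Real.exp (-((2 * M.lam + 1) * s)) * ψ₁ s y)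
    (w := fun s y => Real.exp (-((2 * M.lam + 1) * s)) * ψ₂ s y) fun y hy => by
    rw [← mul_sub, abs_mul, Real.abs_exp]
    exact mul_le_mul_of_nonneg_left (hC s hs₀ y hy) (Real.exp_pos _).le
  linarith

end Contraction

lemma contDiffOn_of_eqOn_integral {f g : ℝ → ℝ} {a b : ℝ} (hg : Continuous g)
    (hf : Set.EqOn f (fun t => ∫ s in t..b, g s) (Set.Icc a b)) :
    ContDiffOn ℝ 1 f (Set.Icc a b) := by
  refine ContDiffOn.congr (ContDiff.contDiffOn ?_) hf
  rw [contDiff_one_iff_deriv, funext fun t => (hasDerivAt_integral_left_of_continuous hg b t).deriv]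
  exact ⟨fun t => (hasDerivAt_integral_left_of_continuous hg b t).differentiableAt, hg.neg⟩

lemma derivWithin_of_eqOn_integral {f g : ℝ → ℝ} {a b : ℝ} (hab : a < b) (hg : Continuous g)
    (hf : Set.EqOn f (fun t => ∫ s in t..b, g s) (Set.Icc a b)) {t : ℝ}
    (ht : t ∈ Set.Icc a b) : derivWithin f (Set.Icc a b) t = -g t :=
  ((hasDerivAt_integral_left_of_continuous hg b t).hasDerivWithinAt.congr_of_mem hf ht).derivWithin
    (uniqueDiffOn_Icc hab t ht)

section FixedPoint

variable {m n : ℕ} (M : NRM m n)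

noncomputable def NRM.extend (ψ : C(Set.Icc (0:ℝ) M.T, M.States → ℝ)) :
    ℝ → (Fin m → ℤ) → ℝ :=
  fun s y => if h : y ∈ M.States then ψ (Set.projIcc 0 M.T M.T_pos.le s) ⟨y, h⟩ else 0

lemma NRM.continuous_extend (ψ : C(Set.Icc (0:ℝ) M.T, M.States → ℝ)) (y : Fin m → ℤ) :
    Continuous fun s => M.extend ψ s y := by
  by_cases hy : y ∈ M.States
  · simp only [NRM.extend, dif_pos hy]
    exact (continuous_apply _).comp (ψ.continuous.comp continuous_projIcc)
  · simp only [NRM.extend, dif_neg hy]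
    exact continuous_const

lemma NRM.extend_of_mem (ψ : C(Set.Icc (0:ℝ) M.T, M.States → ℝ)) {s : ℝ}
    (hs : s ∈ Set.Icc 0 M.T) {y : Fin m → ℤ} (hy : y ∈ M.States) :
    M.extend ψ s y = ψ ⟨s, hs⟩ ⟨y, hy⟩ := by
  simp only [NRM.extend, dif_pos hy, Set.projIcc_of_mem _ hs]

lemma NRM.abs_extend_sub_le (ψ₁ ψ₂ : C(Set.Icc (0:ℝ) M.T, M.States → ℝ)) (s : ℝ)
    (y : Fin m → ℤ) : |M.extend ψ₁ s y - M.extend ψ₂ s y| ≤ dist ψ₁ ψ₂ := by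
  by_cases hy : y ∈ M.States
  · simp only [NRM.extend, dif_pos hy, ← Real.dist_eq]
    exact (dist_le_pi_dist _ _ _).trans (ContinuousMap.dist_apply_le_dist _)
  · simp only [NRM.extend, dif_neg hy, sub_zero, abs_zero]
    exact dist_nonneg

lemma NRM.abs_extend_le (ψ : C(Set.Icc (0:ℝ) M.T, M.States → ℝ)) (s : ℝ) (y : Fin m → ℤ) :
    |M.extend ψ s y| ≤ ‖ψ‖ := by
  simpa [NRM.extend] using M.abs_extend_sub_le ψ 0 s y

noncomputable def NRM.LbarC (hγ : 0 < M.gamma) (ψ : C(Set.Icc (0:ℝ) M.T, M.States → ℝ)) :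
    C(Set.Icc (0:ℝ) M.T, M.States → ℝ) where
  toFun t x := M.Lbar (M.extend ψ) t x
  continuous_toFun := continuous_pi fun x => by
    simp only [M.Lbar_eq_integral_softH hγ]
    refine ((Real.continuous_exp.comp (continuous_const.mul continuous_id)).mul
      (continuous_iff_continuousAt.2 fun t => (hasDerivAt_integral_left_of_continuous
        (M.continuous_softH x fun y => ?_) M.T t).continuousAt)).comp continuous_subtype_val
    exact (Real.continuous_exp.comp (continuous_const.mul continuous_id).neg).mul
      (M.continuous_extend ψ y)

lemma NRM.contractingWith_LbarC (hγ : 0 < M.gamma) :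
    ContractingWith (2 * M.lam / (2 * M.lam + 1)).toNNReal (M.LbarC hγ) := by
  have hlam := M.lam_pos
  have hK : 0 ≤ 2 * M.lam / (2 * M.lam + 1) := by positivity
  refine ⟨Real.toNNReal_lt_one.2 ((div_lt_one (by linarith)).2 (by linarith)),
    LipschitzWith.of_dist_le_mul fun ψ₁ ψ₂ => ?_⟩
  have hnn : 0 ≤ 2 * M.lam / (2 * M.lam + 1) * dist ψ₁ ψ₂ := mul_nonneg hK dist_nonneg
  rw [Real.coe_toNNReal _ hK, ContinuousMap.dist_le hnn]
  refine fun t => (dist_pi_le_iff hnn).2 fun x => ?_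
  rw [Real.dist_eq]
  exact M.abs_Lbar_sub_le hγ (fun y => (M.continuous_extend ψ₁ y).measurable)
    (fun y => (M.continuous_extend ψ₂ y).measurable) (fun s _ y _ => M.abs_extend_le ψ₁ s y)
    (fun s _ y _ => M.abs_extend_le ψ₂ s y) (fun s _ y _ => M.abs_extend_sub_le ψ₁ ψ₂ s y) t.2 x

theorem NRM.exists_integral_solution (hγ : 0 < M.gamma) :
    ∃ v : ℝ → (Fin m → ℤ) → ℝ, (∀ y, Continuous fun s => v s y) ∧
      ∀ t ∈ Set.Icc 0 M.T, ∀ x ∈ M.States, v t x = ∫ s in t..M.T, M.softH s x v := by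
  obtain ⟨ψ, hψ⟩ : ∃ ψ, M.LbarC hγ ψ = ψ :=
    ⟨_, (M.contractingWith_LbarC hγ).fixedPoint_isFixedPt⟩
  refine ⟨fun s y => Real.exp (-((2 * M.lam + 1) * s)) * M.extend ψ s y, fun y =>
    (Real.continuous_exp.comp (continuous_const.mul continuous_id).neg).mul
      (M.continuous_extend ψ y), fun t ht x hx => ?_⟩
  have hfix : M.Lbar (M.extend ψ) t x = M.extend ψ t x := by
    rw [M.extend_of_mem ψ ht hx]
    exact congrArg (fun φ => φ ⟨t, ht⟩ ⟨x, hx⟩) hψ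
  dsimp only
  rw [← hfix, M.Lbar_eq_integral_softH hγ, ← mul_assoc, ← Real.exp_add, neg_add_cancel,
    Real.exp_zero, one_mul]

theorem NRM.exists_hjb_solution (hγ : 0 < M.gamma) :
    ∃ v : ℝ → (Fin m → ℤ) → ℝ, M.C10 v
      ∧ (∀ t ∈ Set.Ico (0:ℝ) M.T, ∀ x ∈ M.States,
          M.dvt v t x
            + (⨆ pol : Policy M, ∑ S ∈ M.feas x,
                (M.H t x S v - M.gamma * Real.log (pol.π t x S)) * pol.π t x S)
            = 0)
      ∧ ∀ x ∈ M.States, v M.T x = 0 := by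
  obtain ⟨v, hv, hint⟩ := M.exists_integral_solution hγ
  have hg : ∀ x, Continuous fun s => M.softH s x v := fun x => M.continuous_softH x hv
  refine ⟨v, fun x hx => contDiffOn_of_eqOn_integral (hg x) fun t ht => hint t ht x hx,
    fun t ht x hx => ?_, fun x hx => by simpa using hint M.T ⟨M.T_pos.le, le_rfl⟩ x hx⟩
  rw [NRM.dvt, derivWithin_of_eqOn_integral M.T_pos (hg x) (fun s hs => hint s hs x hx)
    (Set.Ico_subset_Icc_self ht), M.iSup_policy_eq_softH hγ, neg_add_cancel]

end FixedPoint

/-- `ℒ̄` is a contraction on `B([0,T] × 𝒳)` (with constant `2λ/(2λ+1)` for the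
supremum norm), and the exploratory HJB equation
`∂v/∂t (t,x) + sup_{π ∈ Π} ∑_{S ∈ 𝒜(x)} [H(t,x,S,v) - γ log π(S|t,x)] π(S|t,x) = 0`
on `[0,T) × 𝒳` with `v(T,·) = 0` admits a solution in `C^{1,0}([0,T] × 𝒳)`. -/
theorem Lbar_contraction_and_hjb_solution {m n : ℕ} (M : NRM m n)
    (hγ : 0 < M.gamma) :
    (∀ ψ₁ ψ₂ : ℝ → (Fin m → ℤ) → ℝ,
      (∀ x, Measurable fun t => ψ₁ t x) →
      (∀ x, Measurable fun t => ψ₂ t x) →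
      (∃ C₁, ∀ t ∈ Set.Icc (0:ℝ) M.T, ∀ x ∈ M.States, |ψ₁ t x| ≤ C₁) →
      (∃ C₂, ∀ t ∈ Set.Icc (0:ℝ) M.T, ∀ x ∈ M.States, |ψ₂ t x| ≤ C₂) →
      ∀ C : ℝ, (∀ t ∈ Set.Icc (0:ℝ) M.T, ∀ x ∈ M.States, |ψ₁ t x - ψ₂ t x| ≤ C) →
        ∀ t ∈ Set.Icc (0:ℝ) M.T, ∀ x ∈ M.States,
          |M.Lbar ψ₁ t x - M.Lbar ψ₂ t x| ≤ (2 * M.lam / (2 * M.lam + 1)) * C)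
    ∧ ∃ v : ℝ → (Fin m → ℤ) → ℝ, M.C10 v
        ∧ (∀ t ∈ Set.Ico (0:ℝ) M.T, ∀ x ∈ M.States,
            M.dvt v t x
              + (⨆ pol : Policy M, ∑ S ∈ M.feas x,
                  (M.H t x S v - M.gamma * Real.log (pol.π t x S)) * pol.π t x S)
              = 0)
        ∧ ∀ x ∈ M.States, v M.T x = 0 :=
  ⟨fun _ _ hm₁ hm₂ ⟨_, hb₁⟩ ⟨_, hb₂⟩ _ hC _ ht x _ =>
      M.abs_Lbar_sub_le hγ hm₁ hm₂ hb₁ hb₂ hC ht x,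
    M.exists_hjb_solution hγ⟩

end RLNRM
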